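/- For all pairwise distinct points x, y, z ∈ ℝ³ and all indices μ, ν, λ ∈ {1,2,3}, the three-point kernel vanishes: ∑_{τ,ρ,σ} ε^{μνλ}_{τρσ} · (x−y)_τ (y−z)_ρ (x−z)_σ / ((4π)³ ‖x−y‖³ ‖y−z‖³ ‖z−x‖³) = 0, where ε^{μνλ}_{τρσ} = δ^μ_τ δ^ν_σ δ^λ_ρ + δ^μ_σ δ^ν_ρ δ^λ_τ + δ^μ_ρ δ^ν_τ δ^λ_σ − δ^μ_ρ δ^ν_σ δ^λ_τ − δ^μ_σ δ^ν_τ δ^λ_ρ − δ^μ_τ δ^ν_ρ δ^λ_σ. (This is the vanishing of the nonlocal component of the one-loop three-point proper vertex of the BF theory, equation (4.22).) -/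
import Mathlib


/-- The Euclidean norm on `ℝ³` (as `Fin 3 → ℝ`). -/
noncomputable def enorm3 (x : Fin 3 → ℝ) : ℝ :=
  Real.sqrt (∑ i, x i ^ 2)

/-- The completely antisymmetric tensor
`ε^{μνλ}_{τρσ} = δ^μ_τ δ^ν_σ δ^λ_ρ + δ^μ_σ δ^ν_ρ δ^λ_τ + δ^μ_ρ δ^ν_τ δ^λ_σ
  − δ^μ_ρ δ^ν_σ δ^λ_τ − δ^μ_σ δ^ν_τ δ^λ_ρ − δ^μ_τ δ^ν_ρ δ^λ_σ` of equation (4.20). -/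
def epsSix (μ ν lam τ ρ σ : Fin 3) : ℝ :=
    (if μ = τ then 1 else 0) * (if ν = σ then 1 else 0) * (if lam = ρ then 1 else 0)
  + (if μ = σ then 1 else 0) * (if ν = ρ then 1 else 0) * (if lam = τ then 1 else 0)
  + (if μ = ρ then 1 else 0) * (if ν = τ then 1 else 0) * (if lam = σ then 1 else 0)
  - (if μ = ρ then 1 else 0) * (if ν = σ then 1 else 0) * (if lam = τ then 1 else 0)
  - (if μ = σ then 1 else 0) * (if ν = τ then 1 else 0) * (if lam = ρ then 1 else 0)
  - (if μ = τ then 1 else 0) * (if ν = ρ then 1 else 0) * (if lam = σ then 1 else 0)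

/-- Equation (4.22): for pairwise distinct points `x y z ∈ ℝ³` and any indices
`μ ν λ`, the nonlocal component of the one-loop three-point kernel of the BF theory
vanishes. -/
theorem three_point_kernel_vanishes (x y z : Fin 3 → ℝ)
    (hxy : x ≠ y) (hyz : y ≠ z) (hxz : x ≠ z) (μ ν lam : Fin 3) :
    ∑ τ, ∑ ρ, ∑ σ, epsSix μ ν lam τ ρ σ *
        ((x - y) τ * ((y - z) ρ * (x - z) σ)) /
        ((4 * Real.pi) ^ 3 *
          (enorm3 (x - y) ^ 3 * (enorm3 (y - z) ^ 3 * enorm3 (z - x) ^ 3))) = 0 := by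
  have h : ∀ i, x i - z i = (x i - y i) + (y i - z i) := fun i => by ring
  simp only [Fin.sum_univ_three, epsSix, Pi.sub_apply, h]
  ring
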